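/- arXiv:1501.00689 — 2 statements merged into one kernel-verified Lean document; each statement's English description precedes it below -/
import Mathlib

section
/- Let L be a limit operator on a set X with derived topology τ := τ_L, and let D ⊆ X be an open subset that is Hausdorff and locally compact in the subspace topology. If L is of first order (on all of X), then the modified limit operator L* is also of first order, and the topology τ_{L*} derived from L* coincides with (τ*)_Seq, the topology derived from the associated limit operator of the topology τ* generated by the subbasis τ ∪ {X \ K : K a compact subset of D}. -/
open Set Filter Topology

universe u

/-- A limit operator on `X`: a map from sequences to sets of "limits",
compatible with subsequences. -/
def IsLimitOp {X : Type u} (L : (ℕ → X) → Set X) : Prop :=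
  ∀ (σ : ℕ → X) (φ : ℕ → ℕ), StrictMono φ → L σ ⊆ L (σ ∘ φ)

/-- `C` is sequentially closed with respect to the limit operator `L`. -/
def SeqClosedFor {X : Type u} (L : (ℕ → X) → Set X) (C : Set X) : Prop :=
  ∀ σ : ℕ → X, (∀ n, σ n ∈ C) → L σ ⊆ C

/-- The topology derived from a limit operator `L`: its closed sets are exactly
the sets `C` such that `L σ ⊆ C` for every sequence `σ` with values in `C`. -/
def derivedTop {X : Type u} (L : (ℕ → X) → Set X) (hL : IsLimitOp L) :
    TopologicalSpace X :=
  TopologicalSpace.ofClosed {C | SeqClosedFor L C}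
    (fun σ h => absurd (h 0) (Set.notMem_empty _))
    (fun A hA σ hσ p hp => by
      rw [Set.mem_sInter]
      intro C hC
      exact hA hC σ (fun n => Set.mem_sInter.mp (hσ n) C hC) hp)
    (by
      intro C hC B hB σ hσ p hp
      by_cases hinf : {n | σ n ∈ C}.Infinite
      · exact Or.inl (hC _ (fun n => Nat.nth_mem_of_infinite hinf n)
          (hL σ _ (Nat.nth_strictMono hinf) hp))
      · have hfin : {n | σ n ∈ C}.Finite := Set.not_infinite.mp hinf
        have hBinf : {n | σ n ∈ B}.Infinite :=
          Set.Infinite.mono (fun n hn => (hσ n).resolve_left hn) hfin.infinite_compl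
        exact Or.inr (hB _ (fun n => Nat.nth_mem_of_infinite hBinf n)
          (hL σ _ (Nat.nth_strictMono hBinf) hp)))

/-- The limit operator associated to a topology `t`: it assigns to each sequence
the set of all its limits in `t`. -/
def assocLimOp {X : Type u} (t : TopologicalSpace X) : (ℕ → X) → Set X :=
  fun σ => {p | Filter.Tendsto σ Filter.atTop (@nhds X t p)}

theorem assocLimOp_isLimitOp {X : Type u} (t : TopologicalSpace X) :
    IsLimitOp (assocLimOp t) :=
  fun _σ _φ hφ _p hp => hp.comp hφ.tendsto_atTop

/-- `τ_Seq`: the topology derived from the limit operator associated to `t`. -/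
def seqModTop {X : Type u} (t : TopologicalSpace X) : TopologicalSpace X :=
  derivedTop (assocLimOp t) (assocLimOp_isLimitOp t)

/-- `L` is of first order on `D`. -/
def IsFirstOrderOpOn {X : Type u} (L : (ℕ → X) → Set X) (hL : IsLimitOp L)
    (D : Set X) : Prop :=
  ∀ σ : ℕ → X, (∀ n, σ n ∈ D) → ∀ p ∈ D,
    (p ∈ L σ ↔ Filter.Tendsto σ Filter.atTop (@nhds X (derivedTop L hL) p))

/-- `L` is of first order. -/
def IsFirstOrderOp {X : Type u} (L : (ℕ → X) → Set X) (hL : IsLimitOp L) : Prop :=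
  ∀ (σ : ℕ → X) (p : X),
    p ∈ L σ ↔ Filter.Tendsto σ Filter.atTop (@nhds X (derivedTop L hL) p)

/-- A limit operator is coherent if every constant sequence has its value as a limit. -/
def CoherentOp {X : Type u} (L : (ℕ → X) → Set X) : Prop :=
  ∀ x : X, x ∈ L (fun _ => x)

/-- The transfinite iterates of a limit operator: `L^1 σ = L σ` and, for `i ≠ 1`,
`L^i σ = {p | p ∈ L ρ for some sequence ρ with values in ⋃_{j<i} L^j σ}`. -/
noncomputable def iterOp {X : Type u} (L : (ℕ → X) → Set X) (σ : ℕ → X)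
    (i : Ordinal.{0}) : Set X :=
  if i = 1 then L σ
  else {p | ∃ ρ : ℕ → X,
    (∀ n, ∃ j : Ordinal.{0}, ∃ _hj : j < i, ρ n ∈ iterOp L σ j) ∧ p ∈ L ρ}
termination_by i

open Classical in
/-- The modified limit operator `L*` relative to a subset `D`. -/
noncomputable def modOp {X : Type u} (L : (ℕ → X) → Set X) (D : Set X) :
    (ℕ → X) → Set X := fun σ =>
  if ∃ φ : ℕ → ℕ, StrictMono φ ∧ ∃ p ∈ D, p ∈ L (σ ∘ φ) then L σ ∩ D else L σ

/-- The `D`-separating topology `τ*`: generated by the subbasis consisting of the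
`t`-open sets together with the complements of compact subsets of `D`. -/
def sepTop {X : Type u} (t : TopologicalSpace X) (D : Set X) : TopologicalSpace X :=
  TopologicalSpace.generateFrom
    ({U : Set X | @IsOpen X t U} ∪ {V : Set X | ∃ K, K ⊆ D ∧ @IsCompact X t K ∧ V = Kᶜ})

/-- Condition (A_Fin): `t'` refines `t`. -/
def AFin {X : Type u} (t t' : TopologicalSpace X) : Prop :=
  ∀ U : Set X, @IsOpen X t U → @IsOpen X t' U

/-- Condition (A_Sep): every `p ∈ D` and `q ∉ D` are separated by a `t`-open set
and a `t'`-open set. -/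
def ASep {X : Type u} (t t' : TopologicalSpace X) (D : Set X) : Prop :=
  ∀ p ∈ D, ∀ q ∈ (Dᶜ : Set X), ∃ U V : Set X,
    @IsOpen X t U ∧ @IsOpen X t' V ∧ p ∈ U ∧ q ∈ V ∧ U ∩ V = ∅

/-- The restriction of a limit operator `L` to a subset `D`, as an operator on `↥D`:
`L|_D(σ) = L(σ) ∩ D`. -/
def restrictOp {X : Type u} (L : (ℕ → X) → Set X) (D : Set X) :
    (ℕ → D) → Set D :=
  fun σ => {d : D | (d : X) ∈ L (fun n => (σ n : X))}

/-!
If `L` is of first order, it is the limit operator of its derived topology `τ`, which is then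
sequential, so `L*` can be described purely in terms of `τ`-convergence. A sequence converges
in `τ*` iff it converges in `τ` and eventually leaves every compact `K ⊆ D` not containing the
limit. If some subsequence converges to `q ∈ D`, a compact neighbourhood of `q` inside `D`
forces the limit into `D`, and there the `τ*`-limits are exactly the `τ`-limits because compact
subsets of the Hausdorff space `D` are relatively closed. If no subsequence converges into `D`,
the sequence eventually leaves every compact `K ⊆ D`, since `K` is sequentially compact: `D` is
an open, hence sequential, subspace. So `L* = L_{τ*}`, and the limit operator associated with
any topology is of first order, with derived topology its sequential modification.
-/

section DerivedTopology

variable {X : Type*}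

theorem isClosed_derivedTop_iff {L : (ℕ → X) → Set X} (hL : IsLimitOp L) {C : Set X} :
    IsClosed[derivedTop L hL] C ↔ SeqClosedFor L C := by
  rw [← @isOpen_compl_iff X C (derivedTop L hL)]
  show SeqClosedFor L Cᶜᶜ ↔ _
  rw [compl_compl]

theorem seqModTop_le (t : TopologicalSpace X) : seqModTop t ≤ t :=
  TopologicalSpace.le_def.2 fun _ hU _ hσ _ hp =>
    hU.isClosed_compl.mem_of_tendsto hp (.of_forall hσ)

theorem tendsto_seqModTop_iff (t : TopologicalSpace X) {σ : ℕ → X} {p : X} :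
    Tendsto σ atTop (@nhds X (seqModTop t) p) ↔ Tendsto σ atTop (@nhds X t p) := by
  refine ⟨fun h => h.mono_right (nhds_mono (seqModTop_le t)), fun h => ?_⟩
  refine (@tendsto_nhds X (seqModTop t) ℕ p σ atTop).2 fun U hU hpU => ?_
  by_contra hfreq
  obtain ⟨φ, hφ, hφU⟩ := extraction_of_frequently_atTop (not_eventually.1 hfreq)
  exact hU (σ ∘ φ) hφU (h.comp hφ.tendsto_atTop) hpU

theorem isFirstOrderOp_assocLimOp (t : TopologicalSpace X) :
    IsFirstOrderOp (assocLimOp t) (assocLimOp_isLimitOp t) :=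
  fun _ _ => (tendsto_seqModTop_iff t).symm

variable {L : (ℕ → X) → Set X} {hL : IsLimitOp L}

theorem isFirstOrderOp_of_eq_assocLimOp {t : TopologicalSpace X} (h : L = assocLimOp t) :
    IsFirstOrderOp L hL := by
  subst h
  exact isFirstOrderOp_assocLimOp t

theorem derivedTop_eq_seqModTop_of_eq_assocLimOp {t : TopologicalSpace X}
    (h : L = assocLimOp t) : derivedTop L hL = seqModTop t := by
  subst h
  rfl

theorem IsFirstOrderOp.eq_assocLimOp (hfo : IsFirstOrderOp L hL) :
    L = assocLimOp (derivedTop L hL) :=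
  funext fun σ => Set.ext fun p => hfo σ p

theorem IsFirstOrderOp.sequentialSpace (hfo : IsFirstOrderOp L hL) :
    @SequentialSpace X (derivedTop L hL) :=
  @SequentialSpace.mk X (derivedTop L hL) fun _ hs =>
    (isClosed_derivedTop_iff hL).2 fun σ hσ p hp => hs hσ ((hfo σ p).1 hp)

end DerivedTopology

section SequentialSubspace

variable {X : Type*} [TopologicalSpace X] [SequentialSpace X]

theorem IsOpen.sequentialSpace_subtype {U : Set X} (hU : IsOpen U) : SequentialSpace U := by
  refine ⟨fun S hS => ?_⟩
  suffices h : IsClosed (Subtype.val '' S ∪ Uᶜ) by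
    have := h.preimage (continuous_subtype_val (p := (· ∈ U)))
    rwa [preimage_union, Subtype.val_injective.preimage_image, preimage_compl,
      Subtype.coe_preimage_self, compl_univ, union_empty] at this
  refine IsSeqClosed.isClosed fun {x q} hx hxq => ?_
  by_cases hqU : q ∈ U
  · have hev : ∀ᶠ n in atTop, x n ∈ U := hxq (hU.mem_nhds hqU)
    obtain ⟨N, hN⟩ := eventually_atTop.1 hev
    have hS' : ∀ n, (⟨x (n + N), hN _ (Nat.le_add_left N n)⟩ : U) ∈ S := fun n => by
      rcases hx (n + N) with ⟨y, hy, hyx⟩ | h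
      · exact (Subtype.ext hyx.symm : (⟨x (n + N), _⟩ : U) = y) ▸ hy
      · exact absurd (hN _ (Nat.le_add_left N n)) h
    have hlim : Tendsto (fun n => (⟨x (n + N), hN _ (Nat.le_add_left N n)⟩ : U)) atTop
        (𝓝 ⟨q, hqU⟩) :=
      tendsto_subtype_rng.2 (hxq.comp (tendsto_add_atTop_nat N))
    exact Or.inl ⟨_, hS hS' hlim, rfl⟩
  · exact Or.inr hqU

theorem IsClosed.sequentialSpace_subtype {F : Set X} (hF : IsClosed F) : SequentialSpace F := by
  refine ⟨fun S hS => ?_⟩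
  suffices h : IsClosed (Subtype.val '' S) by
    have := h.preimage (continuous_subtype_val (p := (· ∈ F)))
    rwa [Subtype.val_injective.preimage_image] at this
  refine IsSeqClosed.isClosed fun {x q} hx hxq => ?_
  choose y hyS hyx using hx
  have hqF : q ∈ F := hF.mem_of_tendsto hxq (.of_forall fun n => hyx n ▸ (y n).2)
  exact ⟨⟨q, hqF⟩, hS hyS (tendsto_subtype_rng.2 (by simpa only [hyx] using hxq)), rfl⟩

theorem IsCompact.isSeqCompact_of_sequentialSpace [T2Space X] {K : Set X} (hK : IsCompact K) :
    IsSeqCompact K :=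
  haveI := hK.isClosed.sequentialSpace_subtype
  haveI := isCompact_iff_compactSpace.1 hK
  isSeqCompact_iff_seqCompactSpace.2 inferInstance

end SequentialSubspace

section OpenHausdorffSubspace

variable {X : Type*} [t : TopologicalSpace X] {D : Set X}

theorem tendsto_sepTop_iff {σ : ℕ → X} {p : X} :
    Tendsto σ atTop (@nhds X (sepTop t D) p) ↔
      Tendsto σ atTop (𝓝 p) ∧
        ∀ K ⊆ D, IsCompact K → p ∉ K → ∀ᶠ n in atTop, σ n ∉ K := by
  rw [sepTop, TopologicalSpace.tendsto_nhds_generateFrom_iff, tendsto_nhds]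
  constructor
  · intro h
    exact ⟨fun U hU hpU => h U (.inl hU) hpU, fun K hKD hK hpK => h Kᶜ (.inr ⟨K, hKD, hK, rfl⟩) hpK⟩
  · rintro ⟨hopen, hcpt⟩ V (hV | ⟨K, hKD, hK, rfl⟩) hpV
    exacts [hopen V hV hpV, hcpt K hKD hK hpV]

theorem isCompact_preimage_val_of_subset {K : Set X} (hKD : K ⊆ D) (hK : IsCompact K) :
    IsCompact (Subtype.val ⁻¹' K : Set D) :=
  IsInducing.subtypeVal.isCompact_preimage' hK (by rwa [Subtype.range_coe])

variable [T2Space D]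

theorem mem_of_mem_closure_of_isCompact_subset {K : Set X} (hKD : K ⊆ D) (hK : IsCompact K)
    {p : X} (hp : p ∈ closure K) (hpD : p ∈ D) : p ∈ K := by
  have hpK : (⟨p, hpD⟩ : D) ∈ closure (Subtype.val ⁻¹' K) := by
    rwa [closure_subtype, image_preimage_eq_of_subset (by rwa [Subtype.range_coe])]
  exact (isCompact_preimage_val_of_subset hKD hK).isClosed.closure_subset hpK

theorem IsCompact.isSeqCompact_of_subset_isOpen [SequentialSpace X] (hD : IsOpen D) {K : Set X}
    (hKD : K ⊆ D) (hK : IsCompact K) : IsSeqCompact K := by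
  have := hD.sequentialSpace_subtype
  have := (isCompact_preimage_val_of_subset hKD hK).isSeqCompact_of_sequentialSpace
  rwa [Subtype.isSeqCompact_iff, image_preimage_eq_of_subset (by rwa [Subtype.range_coe])] at this

end OpenHausdorffSubspace

section ModifiedOperator

variable {X : Type*} [t : TopologicalSpace X] {D : Set X} [T2Space D] {σ : ℕ → X} {p : X}

theorem tendsto_sepTop_iff_of_tendsto_subseq [LocallyCompactSpace D] (hD : IsOpen D)
    {φ : ℕ → ℕ} (hφ : StrictMono φ) {q : X} (hqD : q ∈ D) (hq : Tendsto (σ ∘ φ) atTop (𝓝 q)) :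
    Tendsto σ atTop (@nhds X (sepTop t D) p) ↔ Tendsto σ atTop (𝓝 p) ∧ p ∈ D := by
  rw [tendsto_sepTop_iff]
  refine and_congr_right fun hp => ⟨fun hcpt => ?_, fun hpD K hKD hK hpK => ?_⟩
  · -- `σ ∘ φ` ends up in a compact neighbourhood of `q` inside `D`, which `σ` must leave
    obtain ⟨s, hs, hsq⟩ := exists_compact_mem_nhds (⟨q, hqD⟩ : D)
    have hsD : Subtype.val '' s ⊆ D := Subtype.coe_image_subset D s
    by_contra hpD
    have hleave := hφ.tendsto_atTop.eventually
      (hcpt _ hsD (hs.image continuous_subtype_val) fun hps => hpD (hsD hps))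
    obtain ⟨n, hin, hout⟩ :=
      ((hq.eventually_mem (hD.isOpenMap_subtype_val.image_mem_nhds hsq)).and hleave).exists
    exact hout hin
  · refine not_frequently.1 fun hfreq => hpK ?_
    exact mem_of_mem_closure_of_isCompact_subset hKD hK
      (mem_closure_of_frequently_of_tendsto hfreq hp) hpD

theorem tendsto_sepTop_iff_of_forall_not_tendsto_subseq [SequentialSpace X] (hD : IsOpen D)
    (hσ : ∀ φ : ℕ → ℕ, StrictMono φ → ∀ q ∈ D, ¬Tendsto (σ ∘ φ) atTop (𝓝 q)) :
    Tendsto σ atTop (@nhds X (sepTop t D) p) ↔ Tendsto σ atTop (𝓝 p) := by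
  rw [tendsto_sepTop_iff]
  refine ⟨And.left, fun hp => ⟨hp, fun K hKD hK _ => not_frequently.1 fun hfreq => ?_⟩⟩
  obtain ⟨q, hqK, φ, hφ, hq⟩ := (hK.isSeqCompact_of_subset_isOpen hD hKD).subseq_of_frequently_in
    (by simpa only [not_not] using hfreq)
  exact hσ φ hφ q (hKD hqK) hq

theorem modOp_assocLimOp [SequentialSpace X] [LocallyCompactSpace D] (hD : IsOpen D) :
    modOp (assocLimOp t) D = assocLimOp (sepTop t D) := by
  ext σ p
  by_cases h : ∃ φ : ℕ → ℕ, StrictMono φ ∧ ∃ q ∈ D, q ∈ assocLimOp t (σ ∘ φ)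
  · obtain ⟨φ, hφ, q, hqD, hq⟩ := h
    rw [modOp, if_pos ⟨φ, hφ, q, hqD, hq⟩]
    exact (tendsto_sepTop_iff_of_tendsto_subseq hD hφ hqD hq).symm
  · rw [modOp, if_neg h]
    push Not at h
    exact (tendsto_sepTop_iff_of_forall_not_tendsto_subseq hD h).symm

end ModifiedOperator

theorem stmt_16 {X : Type u} (L : (ℕ → X) → Set X) (hL : IsLimitOp L)
    (D : Set X) (hD : @IsOpen X (derivedTop L hL) D)
    (hT2 : @T2Space D (TopologicalSpace.induced (Subtype.val : D → X) (derivedTop L hL)))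
    (hLC : @LocallyCompactSpace D (TopologicalSpace.induced (Subtype.val : D → X) (derivedTop L hL)))
    (hM : IsLimitOp (modOp L D))
    (hfo : IsFirstOrderOp L hL) :
    IsFirstOrderOp (modOp L D) hM ∧
    derivedTop (modOp L D) hM = seqModTop (sepTop (derivedTop L hL) D) := by
  have := hfo.sequentialSpace
  have hmod : modOp L D = assocLimOp (sepTop (derivedTop L hL) D) :=
    (congrArg (modOp · D) hfo.eq_assocLimOp).trans (modOp_assocLimOp (t := derivedTop L hL) hD)
  exact ⟨isFirstOrderOp_of_eq_assocLimOp hmod, derivedTop_eq_seqModTop_of_eq_assocLimOp hmod⟩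
end

section
/- Let L be a coherent limit operator on a set X with derived topology τ := τ_L, and let D ⊆ X be an open subset that is Hausdorff and locally compact in the subspace topology. Assume L is of k-th order for some ordinal k (i.e., L_τ(σ) = L^k(σ) for every sequence σ, where L^k is the k-th transfinite iterate of L and L_τ is the associated limit operator of τ) and that L is of first order on D. If the modified operator L* is of first order, then L* = (L_τ)*, i.e., L*(σ) = (L_τ)*(σ) for every sequence σ in X. -/
open Set Filter Topology

universe u

/-!
Split according to whether `σ` has a subsequence with an `L`-limit in `D`; since `D` is open
and `L` is of first order on `D`, this is equivalent to having a subsequence with a `τ`-limit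
in `D`, so `L*` and `(L_τ)*` take the same branch at `σ`.

In the first case both sides are intersected with `D`. A `τ`-limit `p ∈ D` of `σ` is an
`L`-limit of a tail of `σ`, hence an `L*`-limit of that tail, and since `L*` is of first order
its limits do not depend on finitely many terms.

In the second case `L σ` misses `D`, and `L_τ σ = L^k σ`. Every iterate collapses to `L σ`:
a sequence `ρ` in `L σ` has no `L`-limit in the open set `D`, so `L*` agrees with `L` at `σ`
and at `ρ`, and limits of limits are limits for the first-order operator `L*`.
-/

variable {X : Type u}

theorem tendsto_of_forall_tendsto_of_tendsto [TopologicalSpace X] {σ ρ : ℕ → X} {p : X}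
    (hσ : ∀ n, Tendsto σ atTop (𝓝 (ρ n))) (hρ : Tendsto ρ atTop (𝓝 p)) :
    Tendsto σ atTop (𝓝 p) :=
  tendsto_nhds.2 fun U hU hpU =>
    let ⟨n, hn⟩ := (hρ.eventually_mem (hU.mem_nhds hpU)).exists
    tendsto_nhds.1 (hσ n) U hU hn

theorem tendsto_derivedTop_of_mem {L : (ℕ → X) → Set X} (hL : IsLimitOp L) {σ : ℕ → X}
    {p : X} (hp : p ∈ L σ) : Tendsto σ atTop (@nhds X (derivedTop L hL) p) := by
  let := derivedTop L hL
  refine tendsto_nhds.2 fun U hU hpU => ?_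
  by_contra hfreq
  have hinf : {n | σ n ∈ Uᶜ}.Infinite :=
    Nat.frequently_atTop_iff_infinite.1 (not_eventually.1 hfreq)
  exact hU _ (Nat.nth_mem_of_infinite hinf) (hL σ _ (Nat.nth_strictMono hinf) hp) hpU

section FirstOrder

variable {M : (ℕ → X) → Set X} {hM : IsLimitOp M}

theorem IsFirstOrderOp.mem_shift_iff (hfo : IsFirstOrderOp M hM) (σ : ℕ → X) (N : ℕ)
    (p : X) : p ∈ M (fun n => σ (n + N)) ↔ p ∈ M σ := by
  rw [hfo, hfo, tendsto_add_atTop_iff_nat]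

theorem IsFirstOrderOp.mem_of_forall_mem (hfo : IsFirstOrderOp M hM) {σ ρ : ℕ → X} {p : X}
    (hρ : ∀ n, ρ n ∈ M σ) (hp : p ∈ M ρ) : p ∈ M σ := by
  let := derivedTop M hM
  exact (hfo σ p).2 <|
    tendsto_of_forall_tendsto_of_tendsto (fun n => (hfo σ (ρ n)).1 (hρ n)) ((hfo ρ p).1 hp)

end FirstOrder

theorem iterOp_one (L : (ℕ → X) → Set X) (σ : ℕ → X) : iterOp L σ 1 = L σ := by
  rw [iterOp, if_pos rfl]

theorem iterOp_of_ne_one (L : (ℕ → X) → Set X) (σ : ℕ → X) {i : Ordinal.{0}} (hi : i ≠ 1) :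
    iterOp L σ i =
      {p | ∃ ρ : ℕ → X, (∀ n, ∃ j : Ordinal.{0}, ∃ _ : j < i, ρ n ∈ iterOp L σ j) ∧ p ∈ L ρ} := by
  rw [iterOp, if_neg hi]

def HasSubseqLimitIn (L : (ℕ → X) → Set X) (D : Set X) (σ : ℕ → X) : Prop :=
  ∃ φ : ℕ → ℕ, StrictMono φ ∧ ∃ p ∈ D, p ∈ L (σ ∘ φ)

section ModOp

variable {L : (ℕ → X) → Set X} {D : Set X} {σ : ℕ → X}

theorem modOp_of_hasSubseqLimitIn (h : HasSubseqLimitIn L D σ) : modOp L D σ = L σ ∩ D :=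
  if_pos h

theorem modOp_of_not_hasSubseqLimitIn (h : ¬HasSubseqLimitIn L D σ) : modOp L D σ = L σ :=
  if_neg h

theorem modOp_subset : modOp L D σ ⊆ L σ := by
  by_cases h : HasSubseqLimitIn L D σ
  · exact (modOp_of_hasSubseqLimitIn h).trans_subset inter_subset_left
  · exact (modOp_of_not_hasSubseqLimitIn h).subset

end ModOp

section OpenDomain

variable {L : (ℕ → X) → Set X} {hL : IsLimitOp L} {D : Set X} {σ : ℕ → X} {p : X}

theorem exists_mem_shift_of_tendsto (hD : IsOpen[derivedTop L hL] D)
    (hfoD : IsFirstOrderOpOn L hL D) (hpD : p ∈ D)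
    (hσ : Tendsto σ atTop (@nhds X (derivedTop L hL) p)) :
    ∃ N, p ∈ L (fun n => σ (n + N)) := by
  let := derivedTop L hL
  obtain ⟨N, hN⟩ := eventually_atTop.1 (hσ (hD.mem_nhds hpD))
  exact ⟨N, (hfoD _ (fun n => hN _ (Nat.le_add_left N n)) p hpD).2
    ((tendsto_add_atTop_iff_nat N).2 hσ)⟩

theorem hasSubseqLimitIn_assocLimOp_iff (hD : IsOpen[derivedTop L hL] D)
    (hfoD : IsFirstOrderOpOn L hL D) :
    HasSubseqLimitIn (assocLimOp (derivedTop L hL)) D σ ↔ HasSubseqLimitIn L D σ := by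
  constructor
  · rintro ⟨φ, hφ, p, hpD, hp⟩
    obtain ⟨N, hN⟩ := exists_mem_shift_of_tendsto hD hfoD hpD hp
    exact ⟨fun n => φ (n + N), hφ.comp (strictMono_id.add_const N), p, hpD, hN⟩
  · rintro ⟨φ, hφ, p, hpD, hp⟩
    exact ⟨φ, hφ, p, hpD, tendsto_derivedTop_of_mem hL hp⟩

theorem assocLimOp_inter_subset {hM : IsLimitOp (modOp L D)} (hD : IsOpen[derivedTop L hL] D)
    (hfoD : IsFirstOrderOpOn L hL D) (hfoM : IsFirstOrderOp (modOp L D) hM) :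
    assocLimOp (derivedTop L hL) σ ∩ D ⊆ L σ := by
  rintro p ⟨hp, hpD⟩
  obtain ⟨N, hN⟩ := exists_mem_shift_of_tendsto hD hfoD hpD hp
  have hpM : p ∈ modOp L D (fun n => σ (n + N)) := by
    rw [modOp_of_hasSubseqLimitIn ⟨id, strictMono_id, p, hpD, hN⟩]
    exact ⟨hN, hpD⟩
  exact modOp_subset ((hfoM.mem_shift_iff σ N p).1 hpM)

theorem not_hasSubseqLimitIn_of_forall_notMem (hD : IsOpen[derivedTop L hL] D)
    (hσ : ∀ n, σ n ∉ D) : ¬HasSubseqLimitIn L D σ := by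
  let := derivedTop L hL
  rintro ⟨φ, -, p, hpD, hp⟩
  obtain ⟨n, hn⟩ := ((tendsto_derivedTop_of_mem hL hp).eventually_mem (hD.mem_nhds hpD)).exists
  exact hσ _ hn

theorem iterOp_subset_of_not_hasSubseqLimitIn {hM : IsLimitOp (modOp L D)}
    (hD : IsOpen[derivedTop L hL] D) (hfoM : IsFirstOrderOp (modOp L D) hM)
    (hσ : ¬HasSubseqLimitIn L D σ) (j : Ordinal.{0}) : iterOp L σ j ⊆ L σ := by
  induction j using WellFoundedLT.induction with
  | _ j IH =>
    by_cases hj : j = 1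
    · rw [hj, iterOp_one]
    rw [iterOp_of_ne_one L σ hj]
    rintro p ⟨ρ, hρ, hp⟩
    have hρσ : ∀ n, ρ n ∈ L σ := fun n =>
      let ⟨i, hi, hρi⟩ := hρ n
      IH i hi hρi
    have hρD : ∀ n, ρ n ∉ D := fun n hn => hσ ⟨id, strictMono_id, ρ n, hn, hρσ n⟩
    rw [← modOp_of_not_hasSubseqLimitIn hσ] at hρσ ⊢
    rw [← modOp_of_not_hasSubseqLimitIn (not_hasSubseqLimitIn_of_forall_notMem hD hρD)] at hp
    exact hfoM.mem_of_forall_mem hρσ hp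

end OpenDomain

theorem stmt_18_general {X : Type u} (L : (ℕ → X) → Set X) (hL : IsLimitOp L)
    (D : Set X)
    (hD : @IsOpen X (derivedTop L hL) D)
    (k : Ordinal.{0})
    (hk : ∀ σ : ℕ → X, assocLimOp (derivedTop L hL) σ = iterOp L σ k)
    (hfoD : IsFirstOrderOpOn L hL D)
    (hM : IsLimitOp (modOp L D))
    (hfoM : IsFirstOrderOp (modOp L D) hM) :
    ∀ σ : ℕ → X, modOp L D σ = modOp (assocLimOp (derivedTop L hL)) D σ := by
  intro σ
  have hLτ : L σ ⊆ assocLimOp (derivedTop L hL) σ := fun _ => tendsto_derivedTop_of_mem hL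
  by_cases hσ : HasSubseqLimitIn L D σ
  · rw [modOp_of_hasSubseqLimitIn hσ,
      modOp_of_hasSubseqLimitIn ((hasSubseqLimitIn_assocLimOp_iff hD hfoD).2 hσ)]
    exact (inter_subset_inter_left D hLτ).antisymm
      (subset_inter (assocLimOp_inter_subset hD hfoD hfoM) inter_subset_right)
  · rw [modOp_of_not_hasSubseqLimitIn hσ,
      modOp_of_not_hasSubseqLimitIn (mt (hasSubseqLimitIn_assocLimOp_iff hD hfoD).1 hσ)]
    refine hLτ.antisymm ?_
    rw [hk σ]
    exact iterOp_subset_of_not_hasSubseqLimitIn hD hfoM hσ k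

theorem stmt_18 {X : Type u} (L : (ℕ → X) → Set X) (hL : IsLimitOp L)
    (hcoh : CoherentOp L) (D : Set X)
    (hD : @IsOpen X (derivedTop L hL) D)
    (hT2 : @T2Space D (TopologicalSpace.induced (Subtype.val : D → X) (derivedTop L hL)))
    (hLC : @LocallyCompactSpace D (TopologicalSpace.induced (Subtype.val : D → X) (derivedTop L hL)))
    (k : Ordinal.{0})
    (hk : ∀ σ : ℕ → X, assocLimOp (derivedTop L hL) σ = iterOp L σ k)
    (hfoD : IsFirstOrderOpOn L hL D)
    (hM : IsLimitOp (modOp L D))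
    (hfoM : IsFirstOrderOp (modOp L D) hM) :
    ∀ σ : ℕ → X, modOp L D σ = modOp (assocLimOp (derivedTop L hL)) D σ :=
  stmt_18_general L hL D hD k hk hfoD hM hfoM
end
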